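/- Let (A, Δ, α) be a multiplicative Hom-coassociative coalgebra (i.e. (α⊗α)∘Δ = Δ∘α). Then for any nonnegative integer n, (A, Δ∘αⁿ, α^{n+1}) is a Hom-coassociative coalgebra. -/

import Mathlib

/-!
Multiplicativity propagates to every power: `(αⁿ ⊗ αⁿ) ∘ Δ = Δ ∘ αⁿ`. Precomposing both
structure maps with any `β` satisfying `(β ⊗ β) ∘ Δ = Δ ∘ β` keeps Hom-coassociativity, because
`(αβ ⊗ Δβ) ∘ Δβ = (α ⊗ Δ) ∘ (β ⊗ β) ∘ Δ ∘ β = (α ⊗ Δ) ∘ Δ ∘ β²`, and likewise on the other side.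
Take `β = αⁿ`, so that `α ∘ β = αⁿ⁺¹`.
-/

open TensorProduct LinearMap

namespace HomCoalgebra

variable {R A : Type*} [CommSemiring R] [AddCommMonoid A] [Module R A]

def IsHomCoassociative (Δ : A →ₗ[R] A ⊗[R] A) (α : A →ₗ[R] A) : Prop :=
  map α Δ ∘ₗ Δ = (TensorProduct.assoc R A A A).toLinearMap ∘ₗ map Δ α ∘ₗ Δ

theorem map_pow_comp_eq_comp_pow {Δ : A →ₗ[R] A ⊗[R] A} {α : A →ₗ[R] A}
    (hmult : map α α ∘ₗ Δ = Δ ∘ₗ α) (n : ℕ) :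
    map (α ^ n) (α ^ n) ∘ₗ Δ = Δ ∘ₗ α ^ n := by
  induction n with
  | zero => rw [pow_zero, TensorProduct.map_one]; rfl
  | succ n ih =>
    rw [pow_succ', Module.End.mul_eq_comp, map_comp, comp_assoc, ih, ← comp_assoc, hmult,
      comp_assoc]

theorem IsHomCoassociative.comp {Δ : A →ₗ[R] A ⊗[R] A} {α β : A →ₗ[R] A}
    (h : IsHomCoassociative Δ α) (hβ : map β β ∘ₗ Δ = Δ ∘ₗ β) :
    IsHomCoassociative (Δ ∘ₗ β) (α ∘ₗ β) := by
  have hleft : map (α ∘ₗ β) (Δ ∘ₗ β) ∘ₗ Δ ∘ₗ β = map α Δ ∘ₗ Δ ∘ₗ β ∘ₗ β := by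
    rw [map_comp, comp_assoc, ← comp_assoc β Δ (map β β), hβ, comp_assoc]
  have hright : map (Δ ∘ₗ β) (α ∘ₗ β) ∘ₗ Δ ∘ₗ β = map Δ α ∘ₗ Δ ∘ₗ β ∘ₗ β := by
    rw [map_comp, comp_assoc, ← comp_assoc β Δ (map β β), hβ, comp_assoc]
  unfold IsHomCoassociative
  rw [hleft, hright, ← comp_assoc, h, comp_assoc, comp_assoc]

theorem IsHomCoassociative.comp_pow {Δ : A →ₗ[R] A ⊗[R] A} {α : A →ₗ[R] A}
    (h : IsHomCoassociative Δ α) (hmult : map α α ∘ₗ Δ = Δ ∘ₗ α) (n : ℕ) :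
    IsHomCoassociative (Δ ∘ₗ α ^ n) (α ^ (n + 1)) := by
  rw [pow_succ', Module.End.mul_eq_comp]
  exact h.comp (map_pow_comp_eq_comp_pow hmult n)

end HomCoalgebra

/-- If `(A, Δ, α)` is a multiplicative Hom-coassociative coalgebra
(`(α⊗α)∘Δ = Δ∘α`), then for any `n : ℕ`, `(A, Δ∘αⁿ, α^(n+1))` is a
Hom-coassociative coalgebra. -/
theorem stmt6 {K A : Type*} [Field K] [AddCommGroup A] [Module K A]
    (Δ : A →ₗ[K] A ⊗[K] A) (α : A →ₗ[K] A)
    (hcoassoc : ∀ x : A,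
      TensorProduct.map α Δ (Δ x)
        = TensorProduct.assoc K A A A (TensorProduct.map Δ α (Δ x)))
    (hmult : ∀ x : A, TensorProduct.map α α (Δ x) = Δ (α x)) :
    ∀ (n : ℕ) (x : A),
      TensorProduct.map ((α ^ (n + 1) : A →ₗ[K] A)) (Δ ∘ₗ (α ^ n : A →ₗ[K] A))
          ((Δ ∘ₗ (α ^ n : A →ₗ[K] A)) x)
        = TensorProduct.assoc K A A A
            (TensorProduct.map (Δ ∘ₗ (α ^ n : A →ₗ[K] A)) ((α ^ (n + 1) : A →ₗ[K] A))
              ((Δ ∘ₗ (α ^ n : A →ₗ[K] A)) x)) := by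
  have h : HomCoalgebra.IsHomCoassociative Δ α := LinearMap.ext hcoassoc
  intro n
  exact LinearMap.congr_fun (h.comp_pow (LinearMap.ext hmult) n)
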